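/- Let t0 ∈ (0,1)^m and assume there exists an open neighborhood N(t0) ⊆ (0,1)^m of t0 such that for every t ∈ N(t0) the φ-projection of t on M = S(cl(Θ)) exists and is unique. Then the map ϑ* : N(t0) → cl(Θ), assigning to each t ∈ N(t0) the unique θ ∈ cl(Θ) such that S(θ) is the φ-projection of t on M, is continuous at t0. -/

import Mathlib

/-!
Along `t → t₀` inside `N`, the parameters `ϑ t` stay in the compact set `cl Θ`, so it suffices to
show that every cluster point `θ` of `ϑ` at `t₀` equals `ϑ t₀`. On `[0,1]^m × (0,1)^m` the
divergence `∑ tᵢ φ(sᵢ / tᵢ)` is real-valued and jointly continuous (a convex `φ` is continuous on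
`(0,∞)`, and at `0` by assumption). Passing to the limit in the minimality of `S (ϑ t)` along an
ultrafilter converging to `θ` shows that `S θ` is a `φ`-projection of `t₀`; uniqueness of the
projection and injectivity of `S` give `θ = ϑ t₀`.
-/

open Filter Topology Set

/-- The extended-real-valued integrand `f(v,w)` of a `φ`-divergence:
`f(v,w) = w·φ(v/w)` if `w > 0`, `f(v,0) = v·L` if `v > 0`, and `f(0,0) = 0`,
where `L = lim_{x→∞} φ(x)/x ∈ ℝ ∪ {∞}`. -/
noncomputable def phiF (φ : ℝ → ℝ) (L : EReal) (v w : ℝ) : EReal :=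
  if 0 < w then ((w * φ (v / w) : ℝ) : EReal)
  else if 0 < v then (v : EReal) * L
  else 0

/-- The `φ`-divergence `D_φ(s∣t) = Σ_{i=1}^m f(s_i, t_i)` of `s` relative to `t`. -/
noncomputable def Dphi (φ : ℝ → ℝ) (L : EReal) {m : ℕ} (s t : Fin m → ℝ) : EReal :=
  ∑ i, phiF φ L (s i) (t i)

/-- `p` is a `φ`-projection of `t` on `M`: `p ∈ M` and `D_φ(p∣t) = inf_{s ∈ M} D_φ(s∣t)`. -/
def IsPhiProj (φ : ℝ → ℝ) (L : EReal) {m : ℕ} (M : Set (Fin m → ℝ))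
    (t p : Fin m → ℝ) : Prop :=
  p ∈ M ∧ Dphi φ L p t = ⨅ s ∈ M, Dphi φ L s t

lemma EReal.coe_finsetSum {ι : Type*} (s : Finset ι) (f : ι → ℝ) :
    ((∑ i ∈ s, f i : ℝ) : EReal) = ∑ i ∈ s, (f i : EReal) := by
  induction s using Finset.cons_induction with
  | empty => simp
  | cons a s _ ih => rw [Finset.sum_cons, Finset.sum_cons, EReal.coe_add, ih]

lemma isMinOn_of_tendsto {α X Y β : Type*} [TopologicalSpace X] [TopologicalSpace Y]
    [TopologicalSpace β] [Preorder β] [OrderClosedTopology β]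
    {F : X → Y → β} {K M : Set X} {V : Set Y} {l : Filter α} [l.NeBot]
    {x : α → X} {t : α → Y} {x₀ : X} {t₀ : Y}
    (hF : ContinuousOn (Function.uncurry F) (K ×ˢ V)) (hMK : M ⊆ K)
    (hx : Tendsto x l (𝓝 x₀)) (ht : Tendsto t l (𝓝 t₀)) (hx₀ : x₀ ∈ K) (ht₀ : t₀ ∈ V)
    (hmin : ∀ᶠ a in l, x a ∈ K ∧ t a ∈ V ∧ IsMinOn (F · (t a)) M (x a)) :
    IsMinOn (F · t₀) M x₀ := by
  have hlim : ∀ {y : α → X} {y₀ : X}, y₀ ∈ K → Tendsto y l (𝓝 y₀) →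
      (∀ᶠ a in l, y a ∈ K ∧ t a ∈ V) → Tendsto (fun a => F (y a) (t a)) l (𝓝 (F y₀ t₀)) :=
    fun {y y₀} hy₀ hy hyK => (hF (y₀, t₀) ⟨hy₀, ht₀⟩).tendsto.comp
      (tendsto_nhdsWithin_iff.mpr ⟨hy.prodMk_nhds ht, hyK⟩)
  intro s hs
  refine le_of_tendsto_of_tendsto (hlim hx₀ hx (hmin.mono fun a ha => ⟨ha.1, ha.2.1⟩))
    (hlim (hMK hs) tendsto_const_nhds (hmin.mono fun a ha => ⟨hMK hs, ha.2.1⟩)) ?_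
  exact hmin.mono fun a ha => ha.2.2 hs

noncomputable def phiDiv {ι : Type*} [Fintype ι] (φ : ℝ → ℝ) (s t : ι → ℝ) : ℝ :=
  ∑ i, t i * φ (s i / t i)

lemma continuousOn_phiDiv {ι : Type*} [Fintype ι] {φ : ℝ → ℝ} (hφ : ContinuousOn φ (Ici 0)) :
    ContinuousOn (Function.uncurry (phiDiv (ι := ι) φ))
      ((univ.pi fun _ => Ici 0) ×ˢ (univ.pi fun _ => Ioi 0)) := by
  refine continuousOn_finsetSum _ fun i _ => ?_
  have hratio : ContinuousOn (fun p : (ι → ℝ) × (ι → ℝ) => p.1 i / p.2 i)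
      ((univ.pi fun _ => Ici 0) ×ˢ (univ.pi fun _ => Ioi 0)) :=
    ((continuous_apply i).comp continuous_fst).continuousOn.div
      ((continuous_apply i).comp continuous_snd).continuousOn
      fun p hp => (hp.2 i (mem_univ i)).ne'
  refine ((continuous_apply i).comp continuous_snd).continuousOn.mul (hφ.comp hratio ?_)
  exact fun p hp => mem_Ici.mpr <| div_nonneg (hp.1 i (mem_univ i)) (hp.2 i (mem_univ i)).le

lemma Dphi_eq_phiDiv {φ : ℝ → ℝ} {L : EReal} {m : ℕ} {s t : Fin m → ℝ} (ht : ∀ i, 0 < t i) :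
    Dphi φ L s t = phiDiv φ s t := by
  rw [Dphi, phiDiv, EReal.coe_finsetSum]
  exact Finset.sum_congr rfl fun i _ => by rw [phiF, if_pos (ht i)]

lemma isPhiProj_iff_isMinOn {φ : ℝ → ℝ} {L : EReal} {m : ℕ} {M : Set (Fin m → ℝ)}
    {t p : Fin m → ℝ} (ht : ∀ i, 0 < t i) :
    IsPhiProj φ L M t p ↔ p ∈ M ∧ IsMinOn (phiDiv φ · t) M p := by
  have hmin : IsMinOn (Dphi φ L · t) M p ↔ IsMinOn (phiDiv φ · t) M p := by
    simp only [isMinOn_iff, Dphi_eq_phiDiv ht, EReal.coe_le_coe_iff]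
  rw [IsPhiProj, ← hmin, isMinOn_iff]
  refine and_congr_right fun hp => ⟨fun h s hs => h ▸ iInf₂_le s hs, fun h => ?_⟩
  exact le_antisymm (le_iInf₂ h) (iInf₂_le p hp)

theorem statement8_general (m k : ℕ)
    (φ : ℝ → ℝ) (L : EReal)
    (hφconv : ConvexOn ℝ (Set.Ici 0) φ)
    (hφ0 : ContinuousWithinAt φ (Set.Ici 0) 0)
    (Θ : Set (Fin k → ℝ)) (hΘbd : Bornology.IsBounded Θ)
    (S : (Fin k → ℝ) → (Fin m → ℝ))
    (hScont : ContinuousOn S (closure Θ))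
    (hSinj : Set.InjOn S (closure Θ))
    (hSrange : ∀ θ ∈ closure Θ, ∀ i, S θ i ∈ Set.Icc (0 : ℝ) 1)
    (t0 : Fin m → ℝ) (ht0 : ∀ i, t0 i ∈ Set.Ioo (0 : ℝ) 1)
    (N : Set (Fin m → ℝ)) (ht0N : t0 ∈ N)
    (hNsub : ∀ t ∈ N, ∀ i, t i ∈ Set.Ioo (0 : ℝ) 1)
    (ϑ : (Fin m → ℝ) → (Fin k → ℝ))
    (hϑ : ∀ t ∈ N, ϑ t ∈ closure Θ ∧
      ∀ s, IsPhiProj φ L (S '' closure Θ) t s ↔ s = S (ϑ t)) :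
    ContinuousWithinAt ϑ N t0 := by
  have hpos : ∀ t ∈ N, ∀ i, 0 < t i := fun t ht i => (hNsub t ht i).1
  have hM : S '' closure Θ ⊆ univ.pi fun _ => Ici 0 := by
    rintro _ ⟨θ, hθ, rfl⟩ i -
    exact (hSrange θ hθ i).1
  refine hΘbd.isCompact_closure.tendsto_nhds_of_unique_mapClusterPt
    (eventually_nhdsWithin_of_forall fun t ht => (hϑ t ht).1) fun θ hθ hcl => ?_
  obtain ⟨U, hUN, hUθ⟩ := mapClusterPt_iff_ultrafilter.mp hcl
  have hUN' : ∀ᶠ t in (U : Filter (Fin m → ℝ)), t ∈ N := hUN self_mem_nhdsWithin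
  have hSϑ : Tendsto (fun t => S (ϑ t)) U (𝓝 (S θ)) :=
    (hScont θ hθ).tendsto.comp
      (tendsto_nhdsWithin_iff.mpr ⟨hUθ, hUN'.mono fun t ht => (hϑ t ht).1⟩)
  have hmin : IsMinOn (phiDiv φ · t0) (S '' closure Θ) (S θ) := by
    refine isMinOn_of_tendsto (continuousOn_phiDiv (hφconv.continuousOn_Ici hφ0)) hM hSϑ
      (hUN.trans nhdsWithin_le_nhds) (hM (mem_image_of_mem S hθ)) (fun i _ => (ht0 i).1)
      (hUN'.mono fun t ht => ?_)
    have hproj := (isPhiProj_iff_isMinOn (hpos t ht)).mp (((hϑ t ht).2 _).mpr rfl)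
    exact ⟨hM hproj.1, fun i _ => hpos t ht i, hproj.2⟩
  have hproj0 : IsPhiProj φ L (S '' closure Θ) t0 (S θ) :=
    (isPhiProj_iff_isMinOn fun i => (ht0 i).1).mpr ⟨mem_image_of_mem S hθ, hmin⟩
  exact hSinj hθ (hϑ t0 ht0N).1 (((hϑ t0 ht0N).2 _).mp hproj0)

/-- under the framework assumptions, if on an open neighborhood
`N ⊆ (0,1)^m` of `t0` the `φ`-projection on `M = S(cl Θ)` exists and is unique,
then the parameter map `ϑ*` (characterized by: `S (ϑ* t)` is the unique
`φ`-projection of `t` on `M`, `ϑ* t ∈ cl Θ`) is continuous at `t0`. -/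
theorem statement8 (m k : ℕ) (hm : 1 ≤ m) (hk : 1 ≤ k) (hkm : k ≤ m)
    (φ : ℝ → ℝ) (L : EReal)
    (hφconv : ConvexOn ℝ (Set.Ici 0) φ)
    (hφ0 : ContinuousWithinAt φ (Set.Ici 0) 0)
    (hL : Tendsto (fun x : ℝ => ((φ x / x : ℝ) : EReal)) atTop (𝓝 L))
    (hφsc : StrictConvexOn ℝ (Set.Ici (0 : ℝ)) φ)
    (hφC2 : ContDiffOn ℝ 2 φ (Set.Ioi (0 : ℝ)))
    (Θ : Set (Fin k → ℝ)) (hΘbd : Bornology.IsBounded Θ)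
    (hΘint : (interior Θ).Nonempty)
    (S : (Fin k → ℝ) → (Fin m → ℝ))
    (hScont : ContinuousOn S (closure Θ))
    (hSinj : Set.InjOn S (closure Θ))
    (hSC2 : ContDiffOn ℝ 2 S (interior Θ))
    (hSrange : ∀ θ ∈ closure Θ, ∀ i, S θ i ∈ Set.Icc (0 : ℝ) 1)
    (hSint : ∀ θ ∈ interior Θ, ∀ i, S θ i ∈ Set.Ioo (0 : ℝ) 1)
    (t0 : Fin m → ℝ) (ht0 : ∀ i, t0 i ∈ Set.Ioo (0 : ℝ) 1)
    (N : Set (Fin m → ℝ)) (hNopen : IsOpen N) (ht0N : t0 ∈ N)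
    (hNsub : ∀ t ∈ N, ∀ i, t i ∈ Set.Ioo (0 : ℝ) 1)
    (ϑ : (Fin m → ℝ) → (Fin k → ℝ))
    (hϑ : ∀ t ∈ N, ϑ t ∈ closure Θ ∧
      ∀ s, IsPhiProj φ L (S '' closure Θ) t s ↔ s = S (ϑ t)) :
    ContinuousWithinAt ϑ N t0 :=
  statement8_general m k φ L hφconv hφ0 Θ hΘbd S hScont hSinj hSrange t0 ht0 N ht0N hNsub ϑ hϑ
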